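/- arXiv:1502.07616 — 3 statements merged into one kernel-verified Lean document; each statement's English description precedes it below -/
import Mathlib

section
/- The Borel measure ν on [0,1] with density ξ with respect to Lebesgue measure, dν(x) = ξ(x) dx, is a T-invariant probability measure: ν([0,1]) = 1 and ν(T⁻¹(A)) = ν(A) for every Borel set A ⊆ [0,1]. -/
open MeasureTheory

/-- The Gauss map `T(x) = 1/x − ⌊1/x⌋` for `x ≠ 0`, `T(0) = 0`. -/
noncomputable def gaussMap (x : ℝ) : ℝ := if x = 0 then 0 else Int.fract (1 / x)

/-- `ξ(x) = 1/((log 2)(1+x))`, the density of the Gauss measure. -/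
noncomputable def xi (x : ℝ) : ℝ := 1 / (Real.log 2 * (1 + x))

/-- The Gauss measure `dν = ξ dx` on `[0,1]`. -/
noncomputable def gaussMeasure : Measure ℝ :=
  (volume.restrict (Set.Icc (0:ℝ) 1)).withDensity fun x => ENNReal.ofReal (xi x)

open Set Filter Topology Function

/-!
For `0 ≤ a < 1` the points `x ∈ (0, 1]` with `T x ≤ a` form the disjoint branches
`[1/(n+1+a), 1/(n+1)]`, `n ∈ ℕ`. Writing `F x = log₂ (1 + x)` (`gaussCDF`) for the distribution
function of `ν`, the `n`-th branch has measure
`F (1/(n+1)) - F (1/(n+1+a)) = F (a/(n+1)) - F (a/(n+2))`, so the measures telescope to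
`F a = ν [0, a]`. Hence `ν ∘ T⁻¹` and `ν` agree on all half-lines
`(-∞, a]`, and therefore coincide.
-/

lemma ENNReal.tsum_ofReal_sub_succ {g : ℕ → ℝ} {l : ℝ} (hg : Antitone g)
    (hl : Tendsto g atTop (𝓝 l)) :
    ∑' n, ENNReal.ofReal (g n - g (n + 1)) = ENNReal.ofReal (g 0 - l) := by
  have hnonneg : ∀ n, 0 ≤ g n - g (n + 1) := fun n => sub_nonneg.2 (hg n.le_succ)
  have hsum : HasSum (fun n => g n - g (n + 1)) (g 0 - l) := by
    rw [hasSum_iff_tendsto_nat_of_nonneg hnonneg]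
    simp only [Finset.sum_range_sub']
    exact tendsto_const_nhds.sub hl
  rw [← ENNReal.ofReal_tsum_of_nonneg hnonneg hsum.summable, hsum.tsum_eq]

lemma Int.fract_le_iff_exists {R : Type*} [Ring R] [LinearOrder R] [IsStrictOrderedRing R]
    [FloorRing R] {y a : R} (ha : a < 1) :
    Int.fract y ≤ a ↔ ∃ k : ℤ, (k : R) ≤ y ∧ y ≤ k + a := by
  constructor
  · intro h
    exact ⟨⌊y⌋, Int.floor_le y, sub_le_iff_le_add'.1 h⟩
  · rintro ⟨k, hky, hyk⟩
    rw [Int.fract, Int.floor_eq_iff.2 ⟨hky, hyk.trans_lt ((add_lt_add_iff_left _).2 ha)⟩]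
    exact sub_le_iff_le_add'.2 hyk

lemma volume_withDensity_Ioc_of_hasDerivAt {f F : ℝ → ℝ} {u v : ℝ} (huv : u ≤ v)
    (hf : ContinuousOn f (Icc u v)) (hf₀ : ∀ x ∈ Icc u v, 0 ≤ f x)
    (hF : ∀ x ∈ Icc u v, HasDerivAt F (f x) x) :
    volume.withDensity (fun x => ENNReal.ofReal (f x)) (Ioc u v) =
      ENNReal.ofReal (F v - F u) := by
  rw [withDensity_apply _ measurableSet_Ioc, ← ofReal_integral_eq_lintegral_ofReal
      ((hf.integrableOn_Icc).mono_set Ioc_subset_Icc_self)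
      (ae_restrict_of_forall_mem measurableSet_Ioc fun x hx => hf₀ x (Ioc_subset_Icc_self hx)),
    ← intervalIntegral.integral_of_le huv,
    intervalIntegral.integral_eq_sub_of_hasDerivAt (by rwa [uIcc_of_le huv])
      ((hf.mono (uIcc_of_le huv).le).intervalIntegrable)]

lemma xi_pos {x : ℝ} (hx : -1 < x) : 0 < xi x :=
  one_div_pos.2 (mul_pos (Real.log_pos one_lt_two) (by linarith))

lemma continuousOn_xi : ContinuousOn xi (Ioi (-1)) :=
  continuousOn_const.div (by fun_prop) fun x hx =>
    (mul_pos (Real.log_pos one_lt_two) (by linarith [mem_Ioi.1 hx])).ne'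

noncomputable def gaussCDF (x : ℝ) : ℝ := Real.log (1 + x) / Real.log 2

lemma gaussCDF_zero : gaussCDF 0 = 0 := by simp [gaussCDF]

lemma gaussCDF_one : gaussCDF 1 = 1 := by
  rw [gaussCDF, one_add_one_eq_two, div_self (Real.log_pos one_lt_two).ne']

lemma hasDerivAt_gaussCDF {x : ℝ} (hx : -1 < x) : HasDerivAt gaussCDF (xi x) x := by
  have h1x : (1 : ℝ) + id x ≠ 0 := by rw [id]; linarith
  rw [xi, mul_comm, ← div_div]
  exact (((hasDerivAt_id x).const_add 1).log h1x).div_const (Real.log 2)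

lemma monotoneOn_gaussCDF : MonotoneOn gaussCDF (Ioi (-1)) := fun x hx y _ hxy =>
  div_le_div_of_nonneg_right
    (Real.log_le_log (by linarith [mem_Ioi.1 hx]) (by linarith)) (Real.log_pos one_lt_two).le

-- Both `F (1/m) + F (a/(m+1))` and `F (1/(m+a)) + F (a/m)` equal `log₂ ((m + 1 + a) / m)`.
lemma gaussCDF_one_div_sub_one_div {m a : ℝ} (hm : 0 < m) (ha : 0 ≤ a) :
    gaussCDF (1 / m) - gaussCDF (1 / (m + a)) = gaussCDF (a / m) - gaussCDF (a / (m + 1)) := by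
  simp only [gaussCDF, ← sub_div]
  rw [← Real.log_div (by positivity) (by positivity),
    ← Real.log_div (by positivity) (by positivity)]
  congr 2
  field_simp
  ring

lemma volume_withDensity_xi_Ioc {u v : ℝ} (hu : -1 < u) (huv : u ≤ v) :
    volume.withDensity (fun x => ENNReal.ofReal (xi x)) (Ioc u v) =
      ENNReal.ofReal (gaussCDF v - gaussCDF u) := by
  have hIcc : Icc u v ⊆ Ioi (-1) := fun x hx => hu.trans_le hx.1
  exact volume_withDensity_Ioc_of_hasDerivAt huv (continuousOn_xi.mono hIcc)
    (fun x hx => (xi_pos (hIcc hx)).le) (fun x hx => hasDerivAt_gaussCDF (hIcc hx))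

-- `(0, 1]` rather than `[0, 1]`: this keeps `x = 0`, where `gaussMap` is defined separately,
-- out of every computation.
lemma gaussMeasure_apply (s : Set ℝ) :
    gaussMeasure s = volume.withDensity (fun x => ENNReal.ofReal (xi x)) (s ∩ Ioc 0 1) := by
  rw [gaussMeasure, ← restrict_withDensity measurableSet_Icc, ← restrict_Ioc_eq_restrict_Icc,
    Measure.restrict_apply' measurableSet_Ioc]

lemma gaussMeasure_univ : gaussMeasure univ = 1 := by
  rw [gaussMeasure_apply, univ_inter, volume_withDensity_xi_Ioc (by norm_num) zero_le_one,
    gaussCDF_one, gaussCDF_zero, sub_zero, ENNReal.ofReal_one]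

instance : IsProbabilityMeasure gaussMeasure := ⟨gaussMeasure_univ⟩

lemma measurable_gaussMap : Measurable gaussMap :=
  Measurable.ite (measurableSet_singleton 0) measurable_const (measurable_id.const_div 1).fract

lemma gaussMap_nonneg (x : ℝ) : 0 ≤ gaussMap x := by
  unfold gaussMap
  split_ifs
  exacts [le_rfl, Int.fract_nonneg _]

lemma gaussMap_lt_one (x : ℝ) : gaussMap x < 1 := by
  unfold gaussMap
  split_ifs
  exacts [one_pos, Int.fract_lt_one _]

lemma mem_Icc_one_div_iff {α : Type*} [Field α] [LinearOrder α] [IsStrictOrderedRing α]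
    {x m a : α} (hx : 0 < x) (hm : 0 < m) (hma : 0 < m + a) :
    x ∈ Icc (1 / (m + a)) (1 / m) ↔ m ≤ 1 / x ∧ 1 / x ≤ m + a := by
  rw [mem_Icc, one_div_le hma hx, le_one_div hx hm, and_comm]

lemma gaussMap_le_iff {a x : ℝ} (ha₀ : 0 ≤ a) (ha₁ : a < 1) (hx : x ∈ Ioc 0 1) :
    gaussMap x ≤ a ↔ ∃ n : ℕ, x ∈ Icc (1 / (n + 1 + a)) (1 / (n + 1)) := by
  have hx₀ := hx.1
  have hy : 1 ≤ 1 / x := by rw [le_one_div one_pos hx₀, div_one]; exact hx.2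
  simp only [gaussMap, if_neg hx₀.ne', Int.fract_le_iff_exists ha₁,
    fun n : ℕ => mem_Icc_one_div_iff hx₀ (n.cast_add_one_pos) (by positivity : (0:ℝ) < n + 1 + a)]
  constructor
  · rintro ⟨k, hky, hyk⟩
    obtain ⟨n, rfl⟩ : ∃ n : ℕ, k = n + 1 := by
      have : (0 : ℝ) < k := by linarith
      exact ⟨(k - 1).toNat, by have := Int.cast_pos.1 this; omega⟩
    exact ⟨n, by exact_mod_cast hky, by exact_mod_cast hyk⟩
  · rintro ⟨n, hny, hyn⟩
    exact ⟨n + 1, by exact_mod_cast hny, by exact_mod_cast hyn⟩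

lemma gaussMap_preimage_Iic_inter_Ioc {a : ℝ} (ha₀ : 0 ≤ a) (ha₁ : a < 1) :
    gaussMap ⁻¹' Iic a ∩ Ioc 0 1 = ⋃ n : ℕ, Icc (1 / (n + 1 + a)) (1 / (n + 1)) := by
  ext x
  simp only [mem_inter_iff, mem_preimage, mem_Iic, mem_iUnion]
  refine ⟨fun ⟨hT, hx⟩ => (gaussMap_le_iff ha₀ ha₁ hx).1 hT, fun ⟨n, hn⟩ => ?_⟩
  have hx : x ∈ Ioc 0 1 :=
    ⟨(by positivity : (0 : ℝ) < 1 / (n + 1 + a)).trans_le hn.1,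
      hn.2.trans (div_le_one_of_le₀ (by simp) (by positivity))⟩
  exact ⟨(gaussMap_le_iff ha₀ ha₁ hx).2 ⟨n, hn⟩, hx⟩

lemma pairwise_disjoint_Icc_one_div {a : ℝ} (ha₀ : 0 ≤ a) (ha₁ : a < 1) :
    Pairwise (Disjoint on fun n : ℕ => Icc (1 / (n + 1 + a)) (1 / (n + 1))) := by
  refine (pairwise_disjoint_on _).2 fun i j hij => ?_
  have hgap : (1 : ℝ) / (j + 1) < 1 / (i + 1 + a) := by
    have : (i : ℝ) + 1 ≤ j := by exact_mod_cast hij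
    exact one_div_lt_one_div_of_lt (by positivity) (by linarith)
  exact ((Iic_disjoint_Ici.2 hgap.not_ge).mono Icc_subset_Iic_self Icc_subset_Ici_self).symm

lemma gaussMeasure_preimage_Iic {a : ℝ} (ha₀ : 0 ≤ a) (ha₁ : a < 1) :
    gaussMeasure (gaussMap ⁻¹' Iic a) = ENNReal.ofReal (gaussCDF a) := by
  set g : ℕ → ℝ := fun n => gaussCDF (a / (n + 1))
  have hdom : ∀ n : ℕ, a / (n + 1) ∈ Ioi (-1) := fun n =>
    (neg_one_lt_zero (R := ℝ)).trans_le (by positivity)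
  have hg : Antitone g := fun i j hij => monotoneOn_gaussCDF (hdom j) (hdom i)
    (div_le_div_of_nonneg_left ha₀ (by positivity) (by gcongr))
  have hlim : Tendsto g atTop (𝓝 0) := by
    have h : Tendsto (fun n : ℕ => a / (n + 1)) atTop (𝓝 0) := by
      simpa [div_eq_mul_inv] using tendsto_one_div_add_atTop_nhds_zero_nat.const_mul a
    have := (hasDerivAt_gaussCDF (x := 0) (by norm_num)).continuousAt.tendsto.comp h
    rwa [gaussCDF_zero] at this
  have hbranch : ∀ n : ℕ, volume.withDensity (fun x => ENNReal.ofReal (xi x))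
      (Icc (1 / (n + 1 + a)) (1 / (n + 1))) = ENNReal.ofReal (g n - g (n + 1)) := by
    intro n
    rw [← measure_congr Ioc_ae_eq_Icc,
      volume_withDensity_xi_Ioc (neg_one_lt_zero.trans (by positivity))
        (one_div_le_one_div_of_le (by positivity) (by linarith)),
      gaussCDF_one_div_sub_one_div n.cast_add_one_pos ha₀]
    simp only [g, Nat.cast_add_one]
  rw [gaussMeasure_apply, gaussMap_preimage_Iic_inter_Ioc ha₀ ha₁,
    measure_iUnion (pairwise_disjoint_Icc_one_div ha₀ ha₁) fun _ => measurableSet_Icc,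
    tsum_congr hbranch, ENNReal.tsum_ofReal_sub_succ hg hlim]
  simp only [g, Nat.cast_zero, zero_add, div_one, sub_zero]

lemma gaussMeasure_Iic {a : ℝ} (ha₀ : 0 ≤ a) (ha₁ : a ≤ 1) :
    gaussMeasure (Iic a) = ENNReal.ofReal (gaussCDF a) := by
  rw [gaussMeasure_apply, Iic_inter_Ioc_of_le ha₁, volume_withDensity_xi_Ioc (by norm_num) ha₀,
    gaussCDF_zero, sub_zero]

lemma measurePreserving_gaussMap : MeasurePreserving gaussMap gaussMeasure gaussMeasure := by
  refine ⟨measurable_gaussMap, (Measure.ext_of_Iic _ _ fun a => ?_).symm⟩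
  rw [Measure.map_apply measurable_gaussMap measurableSet_Iic]
  rcases lt_or_ge a 0 with ha₀ | ha₀
  · have hpre : gaussMap ⁻¹' Iic a = ∅ :=
      eq_empty_of_forall_notMem fun x hx => (ha₀.trans_le (gaussMap_nonneg x)).not_ge hx
    have hIic : Iic a ∩ Ioc 0 1 = ∅ :=
      eq_empty_of_forall_notMem fun x ⟨hxa, hx₀, _⟩ => by rw [mem_Iic] at hxa; linarith
    rw [hpre, measure_empty, gaussMeasure_apply, hIic, measure_empty]
  rcases lt_or_ge a 1 with ha₁ | ha₁
  · rw [gaussMeasure_preimage_Iic ha₀ ha₁, gaussMeasure_Iic ha₀ ha₁.le]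
  · have hpre : gaussMap ⁻¹' Iic a = univ :=
      eq_univ_of_forall fun x => (gaussMap_lt_one x).le.trans ha₁
    rw [hpre, gaussMeasure_apply, gaussMeasure_apply, univ_inter,
      inter_eq_right.2 fun x hx => hx.2.trans ha₁]

theorem gaussMeasure_invariant_probability :
    gaussMeasure (Set.Icc (0:ℝ) 1) = 1 ∧
    ∀ A : Set ℝ, MeasurableSet A → A ⊆ Set.Icc (0:ℝ) 1 →
      gaussMeasure (gaussMap ⁻¹' A) = gaussMeasure A := by
  refine ⟨?_, fun A hA _ => measurePreserving_gaussMap.measure_preimage hA.nullMeasurableSet⟩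
  rw [gaussMeasure_apply, ← gaussMeasure_univ, gaussMeasure_apply, univ_inter,
    inter_eq_right.2 Ioc_subset_Icc_self]
end

section
/- For every f ∈ L¹([0,1]) (with respect to Lebesgue measure), the series (Lf)(x) := Σ_{n=1}^∞ (x+n)^{−2} f(1/(x+n)) converges absolutely for Lebesgue-almost every x ∈ [0,1], the function Lf belongs to L¹([0,1]) with ‖Lf‖_{L¹} ≤ ‖f‖_{L¹}, and ∫₀¹ (Lf)(x) dx = ∫₀¹ f(x) dx. -/
open MeasureTheory

/-- The Gauss–Kuzmin–Wirsing transfer operator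
`(L f)(x) = Σ_{n≥1} (x+n)^{-2} f(1/(x+n))`. -/
noncomputable def transferOp (f : ℝ → ℂ) (x : ℝ) : ℂ :=
  ∑' n : ℕ, ((((x + (n : ℝ) + 1) ^ 2)⁻¹ : ℝ) : ℂ) * f (1 / (x + (n : ℝ) + 1))

/-!
For `c > 0` the inverse branch `h x = (x + c)⁻¹` of the Gauss map sends `[0, 1]` onto
`[(c + 1)⁻¹, c⁻¹]` with `|h'| = ((x + c) ^ 2)⁻¹`, so the `n`-th summand `|h'| • (f ∘ h)` of `L f`
(with `c = n + 1`) has the same integral, and the same `L¹` norm, as `f` on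
`((n + 2)⁻¹, (n + 1)⁻¹]`. These intervals tile `(0, 1]`, so the `L¹` norms of the summands add
up to `‖f‖₁` and their integrals to `∫ f`. A series of integrable functions with summable `L¹`
norms converges absolutely almost everywhere to an integrable function, whose integral is the sum
of the integrals and whose `L¹` norm is at most the sum of the norms.
-/

open Set Filter

section SummableIntegralNorm

variable {α E ι : Type*} [MeasurableSpace α] {μ : Measure α} [NormedAddCommGroup E]
  {F : ι → α → E}

theorem tsum_lintegral_enorm_ne_top_of_summable_integral_norm
    (hF_int : ∀ i, Integrable (F i) μ) (hF_sum : Summable fun i ↦ ∫ a, ‖F i a‖ ∂μ) :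
    ∑' i, ∫⁻ a, ‖F i a‖ₑ ∂μ ≠ ⊤ := by
  simp_rw [← ofReal_integral_norm_eq_lintegral_enorm (hF_int _)]
  rw [← ENNReal.ofReal_tsum_of_nonneg (fun i ↦ integral_nonneg fun a ↦ norm_nonneg _) hF_sum]
  exact ENNReal.ofReal_ne_top

variable [Countable ι]

theorem ae_summable_norm_of_summable_integral_norm
    (hF_int : ∀ i, Integrable (F i) μ) (hF_sum : Summable fun i ↦ ∫ a, ‖F i a‖ ∂μ) :
    ∀ᵐ a ∂μ, Summable fun i ↦ ‖F i a‖ :=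
  summable_norm_of_tsum_eLpNorm_ne_top le_rfl (fun i ↦ (hF_int i).1) <| by
    simpa only [eLpNorm_one_eq_lintegral_enorm] using
      tsum_lintegral_enorm_ne_top_of_summable_integral_norm hF_int hF_sum

variable [CompleteSpace E]

theorem integrable_tsum_of_summable_integral_norm
    (hF_int : ∀ i, Integrable (F i) μ) (hF_sum : Summable fun i ↦ ∫ a, ‖F i a‖ ∂μ) :
    Integrable (fun a ↦ ∑' i, F i a) μ := by
  refine ⟨?_, ?_⟩
  · refine aestronglyMeasurable_of_tendsto_ae atTop (f := fun s a ↦ ∑ i ∈ s, F i a)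
      (fun s ↦ Finset.aestronglyMeasurable_fun_sum s fun i _ ↦ (hF_int i).1) ?_
    filter_upwards [ae_summable_norm_of_summable_integral_norm hF_int hF_sum] with a ha
    exact ha.of_norm.hasSum
  · calc ∫⁻ a, ‖∑' i, F i a‖ₑ ∂μ ≤ ∫⁻ a, ∑' i, ‖F i a‖ₑ ∂μ :=
          lintegral_mono fun a ↦ enorm_tsum_le_tsum_enorm
      _ = ∑' i, ∫⁻ a, ‖F i a‖ₑ ∂μ := lintegral_tsum fun i ↦ (hF_int i).1.enorm
      _ < ⊤ := (tsum_lintegral_enorm_ne_top_of_summable_integral_norm hF_int hF_sum).lt_top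

theorem integral_norm_tsum_le_tsum_integral_norm
    (hF_int : ∀ i, Integrable (F i) μ) (hF_sum : Summable fun i ↦ ∫ a, ‖F i a‖ ∂μ) :
    ∫ a, ‖∑' i, F i a‖ ∂μ ≤ ∑' i, ∫ a, ‖F i a‖ ∂μ := by
  have hnorm_int : ∀ i, Integrable (fun a ↦ ‖F i a‖) μ := fun i ↦ (hF_int i).norm
  have hnorm_sum : Summable fun i ↦ ∫ a, ‖‖F i a‖‖ ∂μ := by simpa only [norm_norm] using hF_sum
  calc ∫ a, ‖∑' i, F i a‖ ∂μ ≤ ∫ a, ∑' i, ‖F i a‖ ∂μ := by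
        refine integral_mono_ae (integrable_tsum_of_summable_integral_norm hF_int hF_sum).norm
          (integrable_tsum_of_summable_integral_norm hnorm_int hnorm_sum) ?_
        filter_upwards [ae_summable_norm_of_summable_integral_norm hF_int hF_sum] with a ha
        exact norm_tsum_le_tsum_norm ha
    _ = ∑' i, ∫ a, ‖F i a‖ ∂μ := (integral_tsum_of_summable_integral_norm hnorm_int hnorm_sum).symm

end SummableIntegralNorm

theorem image_inv_Icc_of_pos {K : Type*} [Field K] [LinearOrder K] [IsStrictOrderedRing K]
    {a b : K} (ha : 0 < a) (hab : a ≤ b) : Inv.inv '' Icc a b = Icc b⁻¹ a⁻¹ := by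
  have hb : 0 < b := ha.trans_le hab
  ext y
  rw [Set.image_inv_eq_inv, Set.mem_inv, mem_Icc, mem_Icc]
  constructor
  · rintro ⟨h1, h2⟩
    have hy : 0 < y := inv_pos.mp (ha.trans_le h1)
    exact ⟨(inv_le_comm₀ hy hb).mp h2, (le_inv_comm₀ ha hy).mp h1⟩
  · rintro ⟨h1, h2⟩
    have hy : 0 < y := (inv_pos.mpr hb).trans_le h1
    exact ⟨(le_inv_comm₀ ha hy).mpr h2, (inv_le_comm₀ hy hb).mpr h1⟩

theorem image_inv_add_const_Icc {a b c : ℝ} (hac : 0 < a + c) (hab : a ≤ b) :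
    (fun x ↦ (x + c)⁻¹) '' Icc a b = Icc (b + c)⁻¹ (a + c)⁻¹ := by
  rw [← image_image Inv.inv (· + c), image_add_const_Icc,
    image_inv_Icc_of_pos hac (by linarith)]

theorem hasDerivAt_inv_add_const {c x : ℝ} (h : x + c ≠ 0) :
    HasDerivAt (fun y ↦ (y + c)⁻¹) (-((x + c) ^ 2)⁻¹) x :=
  (((hasDerivAt_id x).add_const c).inv h).congr_deriv (by rw [neg_div, one_div, id])

section GaussBranches

variable {E : Type*} [NormedAddCommGroup E] [NormedSpace ℝ E]

/-- The summand of `transferOp` (with `c = n + 1`) coming from the inverse branch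
`h x = (x + c)⁻¹` of the Gauss map; the factor `((x + c) ^ 2)⁻¹` is `|h' x|`. -/
noncomputable def transferOpTerm (g : ℝ → E) (c x : ℝ) : E := ((x + c) ^ 2)⁻¹ • g (x + c)⁻¹

theorem norm_transferOpTerm (g : ℝ → E) (c x : ℝ) :
    ‖transferOpTerm g c x‖ = transferOpTerm (‖g ·‖) c x := by
  rw [transferOpTerm, transferOpTerm, norm_smul, Real.norm_of_nonneg (by positivity), smul_eq_mul]

theorem integrableOn_transferOpTerm_iff {a b c : ℝ} (hac : 0 < a + c) (hab : a ≤ b)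
    (g : ℝ → E) :
    IntegrableOn (transferOpTerm g c) (Icc a b) ↔ IntegrableOn g (Icc (b + c)⁻¹ (a + c)⁻¹) := by
  rw [← image_inv_add_const_Icc hac hab, integrableOn_image_iff_integrableOn_abs_deriv_smul
    measurableSet_Icc (fun x hx ↦ (hasDerivAt_inv_add_const (by linarith [hx.1])).hasDerivWithinAt)
    (inv_injective.comp (add_left_injective c)).injOn]
  simp only [abs_neg, abs_inv, abs_sq]
  rfl

theorem integral_transferOpTerm {a b c : ℝ} (hac : 0 < a + c) (hab : a ≤ b) (g : ℝ → E) :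
    ∫ x in Icc a b, transferOpTerm g c x = ∫ u in Icc (b + c)⁻¹ (a + c)⁻¹, g u := by
  rw [← image_inv_add_const_Icc hac hab, integral_image_eq_integral_abs_deriv_smul
    measurableSet_Icc (fun x hx ↦ (hasDerivAt_inv_add_const (by linarith [hx.1])).hasDerivWithinAt)
    (inv_injective.comp (add_left_injective c)).injOn]
  simp only [abs_neg, abs_inv, abs_sq]
  rfl

/-- The image of `[0, 1]` under `x ↦ (x + n + 1)⁻¹`, less its left endpoint so that these
intervals are pairwise disjoint. -/
def gaussInterval (n : ℕ) : Set ℝ := Ioc ((n : ℝ) + 2)⁻¹ ((n : ℝ) + 1)⁻¹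

theorem pairwise_disjoint_gaussInterval : Pairwise (Function.onFun Disjoint gaussInterval) := by
  have hanti : Antitone fun n : ℕ ↦ ((n : ℝ) + 1)⁻¹ := fun m n hmn ↦
    inv_anti₀ (by positivity) (by gcongr)
  convert hanti.pairwise_disjoint_on_Ioc_succ using 3 with n
  rw [gaussInterval, Order.succ_eq_add_one, Nat.cast_add_one, add_assoc, one_add_one_eq_two]

theorem iUnion_gaussInterval : ⋃ n, gaussInterval n = Ioc 0 1 := by
  ext x
  simp only [mem_iUnion, gaussInterval, mem_Ioc]
  constructor
  · rintro ⟨n, hlo, hhi⟩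
    exact ⟨(by positivity : (0 : ℝ) < _).trans hlo,
      hhi.trans (inv_le_one_of_one_le₀ (by linarith [n.cast_nonneg (α := ℝ)]))⟩
  · rintro ⟨hx0, hx1⟩
    obtain ⟨n, hn⟩ : ∃ n, ⌊x⁻¹⌋₊ = n + 1 :=
      Nat.exists_eq_add_one.mpr (Nat.floor_pos.mpr ((one_le_inv₀ hx0).mpr hx1))
    have hle : (n : ℝ) + 1 ≤ x⁻¹ := by
      exact_mod_cast hn ▸ Nat.floor_le (inv_nonneg.mpr hx0.le)
    have hlt : x⁻¹ < n + 2 := by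
      have := Nat.lt_floor_add_one x⁻¹
      rw [hn] at this
      push_cast at this
      linarith
    exact ⟨n, (inv_lt_comm₀ hx0 (by positivity)).mp hlt, (le_inv_comm₀ hx0 (by positivity)).mpr hle⟩

theorem hasSum_integral_gaussInterval {g : ℝ → E} (hg : IntegrableOn g (Icc 0 1)) :
    HasSum (fun n ↦ ∫ u in gaussInterval n, g u) (∫ u in Icc 0 1, g u) := by
  rw [integral_Icc_eq_integral_Ioc, ← iUnion_gaussInterval]
  refine hasSum_integral_iUnion (fun n ↦ measurableSet_Ioc) pairwise_disjoint_gaussInterval ?_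
  rw [iUnion_gaussInterval]
  exact hg.mono_set Ioc_subset_Icc_self

theorem integrableOn_transferOpTerm_nat {g : ℝ → E} (hg : IntegrableOn g (Icc 0 1)) (n : ℕ) :
    IntegrableOn (transferOpTerm g (n + 1)) (Icc 0 1) := by
  rw [integrableOn_transferOpTerm_iff (by positivity) zero_le_one]
  exact hg.mono_set (Icc_subset_Icc (by positivity) (inv_le_one_of_one_le₀ (by simp)))

theorem integral_transferOpTerm_nat (g : ℝ → E) (n : ℕ) :
    ∫ x in Icc 0 1, transferOpTerm g (n + 1) x = ∫ u in gaussInterval n, g u := by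
  rw [integral_transferOpTerm (by positivity) zero_le_one, integral_Icc_eq_integral_Ioc,
    gaussInterval, zero_add, add_comm (1 : ℝ), add_assoc, one_add_one_eq_two]

end GaussBranches

theorem transferOp_wellDefined_L1 (f : ℝ → ℂ)
    (hf : IntegrableOn f (Set.Icc (0:ℝ) 1)) :
    (∀ᵐ x ∂(volume.restrict (Set.Icc (0:ℝ) 1)),
        Summable fun n : ℕ =>
          ‖((((x + (n : ℝ) + 1) ^ 2)⁻¹ : ℝ) : ℂ) * f (1 / (x + (n : ℝ) + 1))‖) ∧
    IntegrableOn (transferOp f) (Set.Icc (0:ℝ) 1) ∧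
    (∫ x in Set.Icc (0:ℝ) 1, ‖transferOp f x‖) ≤ (∫ x in Set.Icc (0:ℝ) 1, ‖f x‖) ∧
    (∫ x in Set.Icc (0:ℝ) 1, transferOp f x) = ∫ x in Set.Icc (0:ℝ) 1, f x := by
  set F : ℕ → ℝ → ℂ := fun n ↦ transferOpTerm f (n + 1)
  have hF_eq (n : ℕ) (x : ℝ) :
      ((((x + n + 1) ^ 2)⁻¹ : ℝ) : ℂ) * f (1 / (x + n + 1)) = F n x := by
    rw [← Complex.real_smul, one_div, add_assoc]
    rfl
  have hL : transferOp f = fun x ↦ ∑' n, F n x := funext fun x ↦ tsum_congr (hF_eq · x)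
  have hF_int (n : ℕ) : IntegrableOn (F n) (Icc 0 1) := integrableOn_transferOpTerm_nat hf n
  have hF_norm : HasSum (fun n ↦ ∫ x in Icc 0 1, ‖F n x‖) (∫ x in Icc 0 1, ‖f x‖) := by
    simpa only [F, norm_transferOpTerm, integral_transferOpTerm_nat] using
      hasSum_integral_gaussInterval hf.norm
  refine ⟨?_, ?_, ?_, ?_⟩
  · filter_upwards [ae_summable_norm_of_summable_integral_norm hF_int hF_norm.summable] with x hx
    simpa only [hF_eq] using hx
  · rw [hL]
    exact integrable_tsum_of_summable_integral_norm hF_int hF_norm.summable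
  · rw [hL, ← hF_norm.tsum_eq]
    exact integral_norm_tsum_le_tsum_integral_norm hF_int hF_norm.summable
  · rw [hL, ← integral_tsum_of_summable_integral_norm hF_int hF_norm.summable]
    simpa only [F, integral_transferOpTerm_nat] using (hasSum_integral_gaussInterval hf).tsum_eq
end

section
/- For each positive integer k let h_k : (0,∞) → (0,1) be given by h_k(x) = 1/(x+k). Let a₁,…,a_m be positive integers, and let u, v be coprime positive integers with u < v such that u/v = (h_{a₁} ∘ h_{a₂} ∘ ⋯ ∘ h_{a_m})(0). Then the composition h_{a₁} ∘ ⋯ ∘ h_{a_m} is differentiable at 0 and |(h_{a₁} ∘ ⋯ ∘ h_{a_m})′(0)| = 1/v². -/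
/-!
Follow the value and the derivative at `0` along the composition. If `h_{a₂} ∘ ⋯ ∘ h_{a_m}` maps
`0` to `q/s` in lowest terms with derivative `±1/s²` there, then applying `h_k` gives the value
`s/(q + k s)`, again in lowest terms, and by the chain rule the derivative
`-(±1/s²)/(q/s + k)² = ∓1/(q + k s)²`.
-/

/-- `cfComp [a₁, …, a_m] x = (h_{a₁} ∘ h_{a₂} ∘ ⋯ ∘ h_{a_m})(x)` where `h_k(y) = 1/(y + k)`. -/
noncomputable def cfComp (l : List ℕ) (x : ℝ) : ℝ :=
  l.foldr (fun k y => 1 / (y + (k : ℝ))) x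

theorem cfComp_cons (k : ℕ) (l : List ℕ) (x : ℝ) : cfComp (k :: l) x = (cfComp l x + k)⁻¹ :=
  one_div _

theorem HasDerivAt.cfComp_cons {l : List ℕ} {d x : ℝ} (k : ℕ) (h : HasDerivAt (cfComp l) d x)
    (hx : cfComp l x + k ≠ 0) :
    HasDerivAt (cfComp (k :: l)) (-d / (cfComp l x + k) ^ 2) x := by
  rw [show cfComp (k :: l) = fun y => (cfComp l y + k)⁻¹ from funext (_root_.cfComp_cons k l)]
  exact (h.add_const (k : ℝ)).inv hx

theorem exists_coprime_cfComp_zero_eq_div_hasDerivAt (l : List ℕ) (hl : ∀ k ∈ l, 1 ≤ k) :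
    ∃ q s : ℕ, 0 < s ∧ q.Coprime s ∧ cfComp l 0 = q / s ∧
      ∃ d : ℝ, HasDerivAt (cfComp l) d 0 ∧ |d| = 1 / (s : ℝ) ^ 2 := by
  induction l with
  | nil => exact ⟨0, 1, one_pos, Nat.coprime_one_right 0, by simp [cfComp],
      1, hasDerivAt_id' 0, by simp⟩
  | cons k l ih =>
    obtain ⟨q, s, hs, hqs, hval, d, hd, hd_abs⟩ := ih fun a ha => hl a (List.mem_cons_of_mem _ ha)
    have hk : 1 ≤ k := hl k List.mem_cons_self
    have hs' : 0 < q + k * s := by positivity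
    have hsR : (s : ℝ) ≠ 0 := by positivity
    have hval_add : cfComp l 0 + k = (q + k * s : ℕ) / s := by
      rw [hval]; push_cast; field_simp
    have hval_add_ne : cfComp l 0 + k ≠ 0 := by rw [hval_add]; positivity
    refine ⟨s, q + k * s, hs', (Nat.coprime_add_mul_right_right s q k).mpr hqs.symm, ?_,
      _, hd.cfComp_cons k hval_add_ne, ?_⟩
    · rw [cfComp_cons, hval_add, inv_div]
    · rw [abs_div, abs_neg, hd_abs, abs_of_nonneg (sq_nonneg _), hval_add]
      field_simp

theorem Nat.Coprime.den_eq_of_cast_div_eq {K : Type*} [Field K] [CharZero K] {a b c d : ℕ}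
    (hab : a.Coprime b) (hcd : c.Coprime d) (hb : 0 < b) (hd : 0 < d)
    (h : (a : K) / b = c / d) : b = d := by
  have hℚ : ((a : ℤ) : ℚ) / (b : ℤ) = ((c : ℤ) : ℚ) / (d : ℤ) :=
    Rat.cast_injective (α := K) (by push_cast; exact h)
  exact_mod_cast
    (Rat.div_int_inj (a := a) (b := b) (c := c) (d := d) (by omega) (by omega) hab hcd hℚ).2

theorem cfComp_deriv_at_zero_general (l : List ℕ) (hl1 : ∀ k ∈ l, 1 ≤ k)
    (u v : ℕ) (huv : u < v) (hcop : Nat.gcd u v = 1)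
    (hval : (u : ℝ) / (v : ℝ) = cfComp l 0) :
    DifferentiableAt ℝ (cfComp l) 0 ∧ |deriv (cfComp l) 0| = 1 / (v : ℝ) ^ 2 := by
  obtain ⟨q, s, hs, hqs, hq, d, hd, hd_abs⟩ := exists_coprime_cfComp_zero_eq_div_hasDerivAt l hl1
  have hsv : s = v := hqs.den_eq_of_cast_div_eq hcop hs (by omega) (hq ▸ hval).symm
  exact ⟨hd.differentiableAt, by rw [hd.deriv, hd_abs, hsv]⟩

theorem cfComp_deriv_at_zero (l : List ℕ) (hl : l ≠ []) (hl1 : ∀ k ∈ l, 1 ≤ k)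
    (u v : ℕ) (hu : 0 < u) (huv : u < v) (hcop : Nat.gcd u v = 1)
    (hval : (u : ℝ) / (v : ℝ) = cfComp l 0) :
    DifferentiableAt ℝ (cfComp l) 0 ∧ |deriv (cfComp l) 0| = 1 / (v : ℝ) ^ 2 :=
  cfComp_deriv_at_zero_general l hl1 u v huv hcop hval
end
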